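/- The generalized 3-connectivity of the bubble-sort star graph BS_3 equals 2, i.e., κ₃(BS_3) = 2. -/

import Mathlib

/-- There exist `r` internally disjoint trees connecting `S` in `G`: `r` pairwise
edge-disjoint trees `T₁, …, T_r` of `G`, each containing `S`, with
`V(T_a) ∩ V(T_b) = S` for all `a ≠ b`. -/
def ConnectsSet {V : Type*} (G : SimpleGraph V) (S : Set V) (r : ℕ) : Prop :=
  ∃ T : Fin r → G.Subgraph,
    (∀ a, (T a).coe.IsTree) ∧
    (∀ a, S ⊆ (T a).verts) ∧
    (∀ a b, a ≠ b → (T a).verts ∩ (T b).verts = S) ∧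
    (∀ a b, a ≠ b → Disjoint (T a).edgeSet (T b).edgeSet)

/-- `κ_G(S)`: the maximum number of internally disjoint trees connecting `S` in `G`. -/
noncomputable def treeConn {V : Type*} (G : SimpleGraph V) (S : Set V) : ℕ :=
  sSup {r | ConnectsSet G S r}

/-- The generalized 3-connectivity `κ₃(G) = min {κ_G(S) : S ⊆ V(G), |S| = 3}`. -/
noncomputable def kappa3 {V : Type*} (G : SimpleGraph V) : ℕ :=
  sInf {k | ∃ S : Set V, S.ncard = 3 ∧ treeConn G S = k}

/-- The Cayley graph of a group with connection set `S`: `x` is adjacent to `x·s` for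
`s ∈ S` (symmetrized, loops removed). -/
def cayleyGraph {G : Type*} [Group G] (S : Set G) : SimpleGraph G :=
  SimpleGraph.fromRel (fun x y => ∃ s ∈ S, y = x * s)

/-- The bubble-sort star graph `BS_n`: the Cayley graph of `Sym(n)` (permutations of the
`n` positions `0, …, n-1`, written as words) with connection set
`{(1 i) : 2 ≤ i ≤ n} ∪ {(i, i+1) : 2 ≤ i ≤ n-1}` (in 1-based notation). -/
def bubbleSortStar (n : ℕ) (hn : 3 ≤ n) : SimpleGraph (Equiv.Perm (Fin n)) :=
  cayleyGraph ({σ | ∃ i : Fin n, 1 ≤ (i : ℕ) ∧ σ = Equiv.swap ⟨0, by omega⟩ i} ∪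
    {σ | ∃ j : ℕ, ∃ h : j + 1 < n, 1 ≤ j ∧ σ = Equiv.swap ⟨j, by omega⟩ ⟨j + 1, h⟩})

/-!
`BS₃` is `K₃,₃`: the connection set consists of the three transpositions, so `x ~ y` iff `x` and
`y` have different signs. Three vertices on one side are joined by the two stars centred at two
vertices of the other side. If `a, b` lie on one side and `v` on the other, take the path
`a v b` and, for the third vertex `c` on the side of `a` and some `w ≠ v` on the side of `v`,
the star at `w` on `a, b, c` extended by the edge `c v`.

For the upper bound take `S = {1, (0 1 2), (0 1)}`, where `(0 1 2) = finRotate 3`. The odd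
vertices `(0 2), (1 2)` outside `S` each lie in at most one tree, so with three trees some tree
avoids both; there the even vertices `1, (0 1 2)` can only reach the odd vertex `(0 1)`, so that
tree uses the edges from `(0 1)` to both of them. Every other tree then has to use the last edge
from `(0 1)` to an even vertex, the one to `(0 2 1)`, so there is only one other tree.
-/

open SimpleGraph

namespace SimpleGraph.Subgraph

variable {V : Type*} {G : SimpleGraph V}

lemma Connected.exists_adj {H : G.Subgraph} (hH : H.Connected) {u v : V} (hu : u ∈ H.verts)
    (hv : v ∈ H.verts) (huv : u ≠ v) : ∃ z, H.Adj u z := by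
  have : Nontrivial H.verts := ⟨⟨u, hu⟩, ⟨v, hv⟩, by simpa using huv⟩
  exact hH.preconnected.exists_adj_of_nontrivial ⟨u, hu⟩

lemma Connected.sup_subgraphOfAdj {H : G.Subgraph} (hH : H.Connected) {x y : V}
    (hx : x ∈ H.verts) (hxy : G.Adj x y) : (H ⊔ G.subgraphOfAdj hxy).Connected :=
  connected_sup hH.preconnected (subgraphOfAdj_connected hxy).preconnected ⟨x, hx, by simp⟩

/- Trees are grown by pendant edges while acyclicity is tracked on `spanningCoe`, where a pendant
edge is `IsAcyclic.sup_edge_of_not_reachable`; it descends to `coe` along the embedding. -/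
lemma isTree_coe_of_isAcyclic_spanningCoe {H : G.Subgraph} (hc : H.Connected)
    (ha : H.spanningCoe.IsAcyclic) : H.coe.IsTree :=
  ⟨hc.coe, ha.embedding H.coeEmbeddingSpanningCoe⟩

lemma isAcyclic_spanningCoe_subgraphOfAdj {x y : V} (hxy : G.Adj x y) :
    (G.subgraphOfAdj hxy).spanningCoe.IsAcyclic := by
  rw [spanningCoe_subgraphOfAdj, ← bot_sup_eq (fromEdgeSet _)]
  exact isAcyclic_bot.sup_edge_of_not_reachable
    (not_reachable_of_neighborSet_right_eq_empty hxy.ne (by simp))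

lemma isAcyclic_spanningCoe_sup_subgraphOfAdj {H : G.Subgraph} (hH : H.spanningCoe.IsAcyclic)
    {x y : V} (hxy : G.Adj x y) (hy : y ∉ H.verts) :
    (H ⊔ G.subgraphOfAdj hxy).spanningCoe.IsAcyclic := by
  rw [sup_spanningCoe, spanningCoe_subgraphOfAdj]
  refine hH.sup_edge_of_not_reachable (not_reachable_of_neighborSet_right_eq_empty hxy.ne ?_)
  ext z
  simpa using fun h => hy h.fst_mem

lemma connected_and_isAcyclic_spanningCoe_star {a b c v : V} (hva : G.Adj v a)
    (hvb : G.Adj v b) (hvc : G.Adj v c) (hab : a ≠ b) (hac : a ≠ c) (hbc : b ≠ c) :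
    (G.subgraphOfAdj hva ⊔ G.subgraphOfAdj hvb ⊔ G.subgraphOfAdj hvc).Connected ∧
      (G.subgraphOfAdj hva ⊔ G.subgraphOfAdj hvb ⊔ G.subgraphOfAdj hvc).spanningCoe.IsAcyclic := by
  refine ⟨((subgraphOfAdj_connected hva).sup_subgraphOfAdj (by simp) hvb).sup_subgraphOfAdj
    (by simp) hvc, isAcyclic_spanningCoe_sup_subgraphOfAdj
    (isAcyclic_spanningCoe_sup_subgraphOfAdj (isAcyclic_spanningCoe_subgraphOfAdj hva) hvb ?_)
    hvc ?_⟩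
  · simp [hvb.ne', hab.symm]
  · simp [hvc.ne', hac.symm, hbc.symm]

end SimpleGraph.Subgraph

section ConnectsSet

open Subgraph

variable {V : Type*} {G : SimpleGraph V} {S : Set V}

lemma connectsSet_two_of_isTree {T₀ T₁ : G.Subgraph} (h₀ : T₀.coe.IsTree) (h₁ : T₁.coe.IsTree)
    (hverts : T₀.verts ∩ T₁.verts = S) (hedges : Disjoint T₀.edgeSet T₁.edgeSet) :
    ConnectsSet G S 2 := by
  refine ⟨![T₀, T₁], ?_, ?_, ?_, ?_⟩
  · simp [Fin.forall_fin_two, h₀, h₁]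
  · simp [Fin.forall_fin_two, ← hverts]
  · simp [Fin.forall_fin_two, hverts, Set.inter_comm T₁.verts]
  · simp [Fin.forall_fin_two, hedges, hedges.symm]

lemma connectsSet_two_same_side_of_K₂₃ {a b c v w : V} (hva : G.Adj v a) (hvb : G.Adj v b)
    (hvc : G.Adj v c) (hwa : G.Adj w a) (hwb : G.Adj w b) (hwc : G.Adj w c)
    (hab : a ≠ b) (hac : a ≠ c) (hbc : b ≠ c) (hvw : v ≠ w) :
    ConnectsSet G {a, b, c} 2 := by
  obtain ⟨hvconn, hvacyc⟩ := connected_and_isAcyclic_spanningCoe_star hva hvb hvc hab hac hbc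
  obtain ⟨hwconn, hwacyc⟩ := connected_and_isAcyclic_spanningCoe_star hwa hwb hwc hab hac hbc
  refine connectsSet_two_of_isTree (isTree_coe_of_isAcyclic_spanningCoe hvconn hvacyc)
    (isTree_coe_of_isAcyclic_spanningCoe hwconn hwacyc) ?_ ?_
  · ext x
    simp only [verts_sup, subgraphOfAdj_verts, Set.mem_inter_iff, Set.mem_union,
      Set.mem_insert_iff, Set.mem_singleton_iff]
    grind [hva.ne, hvb.ne, hvc.ne, hwa.ne, hwb.ne, hwc.ne]
  · simp [Set.disjoint_left, hva.ne, hvb.ne, hvc.ne, hvw, hab, hac, hbc]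

lemma connectsSet_two_both_sides_of_K₂₃ {a b c v w : V} (hva : G.Adj v a) (hvb : G.Adj v b)
    (hvc : G.Adj v c) (hwa : G.Adj w a) (hwb : G.Adj w b) (hwc : G.Adj w c)
    (hab : a ≠ b) (hac : a ≠ c) (hbc : b ≠ c) (hvw : v ≠ w) :
    ConnectsSet G {a, b, v} 2 := by
  obtain ⟨hwconn, hwacyc⟩ := connected_and_isAcyclic_spanningCoe_star hwa hwb hwc hab hac hbc
  have hpath := isTree_coe_of_isAcyclic_spanningCoe
    ((subgraphOfAdj_connected hva).sup_subgraphOfAdj (by simp) hvb)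
    (isAcyclic_spanningCoe_sup_subgraphOfAdj (isAcyclic_spanningCoe_subgraphOfAdj hva) hvb
      (by simp [hvb.ne', hab.symm]))
  have hspider := isTree_coe_of_isAcyclic_spanningCoe (hwconn.sup_subgraphOfAdj (by simp) hvc.symm)
    (isAcyclic_spanningCoe_sup_subgraphOfAdj hwacyc hvc.symm
      (by simp [hvw, hva.ne, hvb.ne, hvc.ne]))
  refine connectsSet_two_of_isTree hpath hspider ?_ ?_
  · ext x
    simp only [verts_sup, subgraphOfAdj_verts, Set.mem_inter_iff, Set.mem_union,
      Set.mem_insert_iff, Set.mem_singleton_iff]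
    grind [hva.ne, hvb.ne, hvc.ne, hwa.ne, hwb.ne, hwc.ne]
  · simp [Set.disjoint_left, hva.ne, hvb.ne, hvc.ne, hvw, hab, hac, hbc]

variable {r : ℕ} {T : Fin r → G.Subgraph}

lemma subsingleton_setOf_mem_verts (hverts : ∀ i j, i ≠ j → (T i).verts ∩ (T j).verts = S)
    {x : V} (hx : x ∉ S) : {i | x ∈ (T i).verts}.Subsingleton :=
  fun i hi j hj => by_contra fun hij => hx (hverts i j hij ▸ ⟨hi, hj⟩)

lemma subsingleton_setOf_mem_edgeSet
    (hedges : ∀ i j, i ≠ j → Disjoint (T i).edgeSet (T j).edgeSet) (e : Sym2 V) :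
    {i | e ∈ (T i).edgeSet}.Subsingleton :=
  fun i hi j hj => by_contra fun hij => Set.disjoint_left.1 (hedges i j hij) hi hj

lemma le_two_of_forall_mem_union {s t : Set (Fin r)} (hs : s.Subsingleton)
    (ht : t.Subsingleton) (h : ∀ i, i ∈ s ∪ t) : r ≤ 2 :=
  calc r = (Set.univ : Set (Fin r)).ncard := by simp
    _ ≤ (s ∪ t).ncard := Set.ncard_le_ncard fun i _ => h i
    _ ≤ s.ncard + t.ncard := Set.ncard_union_le s t
    _ ≤ 1 + 1 := add_le_add (Set.ncard_le_one_iff_subsingleton.2 hs)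
      (Set.ncard_le_one_iff_subsingleton.2 ht)

lemma ConnectsSet.le_card_sym2 [Fintype V] {x y : V} (hx : x ∈ S) (hy : y ∈ S) (hxy : x ≠ y)
    (h : ConnectsSet G S r) : r ≤ Fintype.card (Sym2 V) := by
  obtain ⟨T, htree, hsub, -, hedges⟩ := h
  choose z hz using fun i => Connected.exists_adj ⟨(htree i).connected⟩
    (hsub i hx) (hsub i hy) hxy
  have hinj : Function.Injective fun i => s(x, z i) := by
    intro i j hij
    dsimp only at hij
    exact subsingleton_setOf_mem_edgeSet hedges _ (hij ▸ (T i).mem_edgeSet.2 (hz i))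
      ((T j).mem_edgeSet.2 (hz j))
  simpa using Fintype.card_le_of_injective _ hinj

lemma ConnectsSet.le_treeConn [Fintype V] (hS : S.Nontrivial) (h : ConnectsSet G S r) :
    r ≤ treeConn G S := by
  obtain ⟨x, hx, y, hy, hxy⟩ := hS
  exact le_csSup ⟨_, fun _ hr => hr.le_card_sym2 hx hy hxy⟩ h

lemma kappa3_eq_of_forall_le {k : ℕ} (hex : ∃ S : Set V, S.ncard = 3 ∧ treeConn G S = k)
    (hle : ∀ S : Set V, S.ncard = 3 → k ≤ treeConn G S) : kappa3 G = k := by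
  obtain ⟨S, hS, hk⟩ := hex
  exact le_antisymm (Nat.sInf_le ⟨S, hS, hk⟩)
    (le_csInf ⟨k, S, hS, hk⟩ fun _ ⟨S, hS, h⟩ => h ▸ hle S hS)

end ConnectsSet

namespace BubbleSortStarThree

open Equiv Equiv.Perm

local notation "BS₃" => bubbleSortStar 3 (le_refl 3)

lemma eq_cayleyGraph : BS₃ = cayleyGraph {swap 0 1, swap 0 2, swap 1 2} := by
  rw [bubbleSortStar]
  congr 1
  ext σ
  constructor
  · rintro (⟨i, hi, rfl⟩ | ⟨j, hj, hj1, rfl⟩)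
    · fin_cases i
      · simp at hi
      · exact Or.inl rfl
      · exact Or.inr (Or.inl rfl)
    · obtain rfl : j = 1 := by omega
      exact Or.inr (Or.inr rfl)
  · rintro (rfl | rfl | rfl)
    · exact Or.inl ⟨1, by norm_num, rfl⟩
    · exact Or.inl ⟨2, by norm_num, rfl⟩
    · exact Or.inr ⟨1, by omega, by norm_num, rfl⟩

lemma adj_iff {x y : Perm (Fin 3)} : (BS₃).Adj x y ↔ sign x ≠ sign y := by
  rw [eq_cayleyGraph, cayleyGraph, fromRel_adj]
  revert x y
  decide

lemma exists_ne_ne_sign_eq : ∀ a b : Perm (Fin 3), ∃ c, c ≠ a ∧ c ≠ b ∧ sign c = sign a := by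
  decide

lemma exists_ne_sign_ne_sign_ne :
    ∀ a : Perm (Fin 3), ∃ v w : Perm (Fin 3), v ≠ w ∧ sign v ≠ sign a ∧ sign w ≠ sign a := by
  decide

lemma connectsSet_two_of_sign_eq {a b c : Perm (Fin 3)} (hab : a ≠ b) (hac : a ≠ c)
    (hbc : b ≠ c) (hb : sign b = sign a) (hc : sign c = sign a) :
    ConnectsSet BS₃ {a, b, c} 2 := by
  obtain ⟨v, w, hvw, hv, hw⟩ := exists_ne_sign_ne_sign_ne a
  have adj := fun {x y : Perm (Fin 3)} => (adj_iff (x := x) (y := y)).2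
  exact connectsSet_two_same_side_of_K₂₃ (adj hv) (adj (hb ▸ hv)) (adj (hc ▸ hv))
    (adj hw) (adj (hb ▸ hw)) (adj (hc ▸ hw)) hab hac hbc hvw

lemma connectsSet_two_of_sign_ne {a b v : Perm (Fin 3)} (hab : a ≠ b) (hb : sign b = sign a)
    (hv : sign v ≠ sign a) : ConnectsSet BS₃ {a, b, v} 2 := by
  obtain ⟨c, hca, hcb, hc⟩ := exists_ne_ne_sign_eq a b
  obtain ⟨w, hwv, -, hw⟩ := exists_ne_ne_sign_eq v v
  have adj := fun {x y : Perm (Fin 3)} => (adj_iff (x := x) (y := y)).2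
  exact connectsSet_two_both_sides_of_K₂₃ (adj hv) (adj (hb ▸ hv)) (adj (hc ▸ hv))
    (adj (hw ▸ hv)) (adj (hw ▸ hb ▸ hv)) (adj (hw ▸ hc ▸ hv)) hab hca.symm hcb.symm hwv.symm

lemma connectsSet_two_of_ncard_eq_three {S : Set (Perm (Fin 3))} (hS : S.ncard = 3) :
    ConnectsSet BS₃ S 2 := by
  obtain ⟨x, y, z, hxy, hxz, hyz, rfl⟩ := Set.ncard_eq_three.1 hS
  obtain hy | hy := eq_or_ne (sign y) (sign x)
  · obtain hz | hz := eq_or_ne (sign z) (sign x)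
    · exact connectsSet_two_of_sign_eq hxy hxz hyz hy hz
    · exact connectsSet_two_of_sign_ne hxy hy hz
  · obtain hz | hz : sign z = sign x ∨ sign z = sign y :=
      (by decide : ∀ a b c : ℤˣ, b ≠ a → c = a ∨ c = b) _ _ _ hy
    · rw [Set.pair_comm]
      exact connectsSet_two_of_sign_ne hxz hz hy
    · rw [Set.insert_comm, Set.pair_comm]
      exact connectsSet_two_of_sign_ne hyz hz hy.symm

lemma eq_swap_of_sign_ne_of_sign_eq_one : ∀ u z : Perm (Fin 3), sign u = 1 → sign u ≠ sign z →
    z = swap 0 1 ∨ z = swap 0 2 ∨ z = swap 1 2 := by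
  decide

lemma eq_finRotate_of_sign_swap_ne : ∀ z : Perm (Fin 3), sign (swap 0 1 : Perm (Fin 3)) ≠ sign z →
    z = 1 ∨ z = finRotate 3 ∨ z = (finRotate 3)⁻¹ := by
  decide

lemma edges_mem_of_notMem_verts {H : (BS₃).Subgraph} (hH : H.Connected)
    (hS : {1, finRotate 3, swap 0 1} ⊆ H.verts) (h₂ : swap 0 2 ∉ H.verts)
    (h₃ : swap 1 2 ∉ H.verts) :
    s(1, swap 0 1) ∈ H.edgeSet ∧ s(finRotate 3, swap 0 1) ∈ H.edgeSet := by
  have key : ∀ u ∈ H.verts, sign u = 1 → u ≠ swap 0 1 → s(u, swap 0 1) ∈ H.edgeSet := by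
    intro u hu hsign hne
    obtain ⟨z, hz⟩ := hH.exists_adj hu (hS (by simp)) hne
    obtain rfl | rfl | rfl := eq_swap_of_sign_ne_of_sign_eq_one u z hsign (adj_iff.1 (H.adj_sub hz))
    · exact H.mem_edgeSet.2 hz
    · exact absurd hz.snd_mem h₂
    · exact absurd hz.snd_mem h₃
  exact ⟨key 1 (hS (by simp)) (by decide) (by decide),
    key (finRotate 3) (hS (by simp)) (by decide) (by decide)⟩

lemma edge_mem_of_notMem_edgeSet {H : (BS₃).Subgraph} (hH : H.Connected)
    (hS : {1, finRotate 3, swap 0 1} ⊆ H.verts) (h₁ : s(1, swap 0 1) ∉ H.edgeSet)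
    (h₂ : s(finRotate 3, swap 0 1) ∉ H.edgeSet) :
    s(swap 0 1, (finRotate 3)⁻¹) ∈ H.edgeSet := by
  obtain ⟨z, hz⟩ := hH.exists_adj (u := swap 0 1) (v := 1) (hS (by simp)) (hS (by simp))
    (by decide)
  obtain rfl | rfl | rfl := eq_finRotate_of_sign_swap_ne z (adj_iff.1 (H.adj_sub hz))
  · exact absurd (Sym2.eq_swap ▸ H.mem_edgeSet.2 hz) h₁
  · exact absurd (Sym2.eq_swap ▸ H.mem_edgeSet.2 hz) h₂
  · exact H.mem_edgeSet.2 hz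

lemma connectsSet_le_two {r : ℕ} (h : ConnectsSet BS₃ {1, finRotate 3, swap 0 1} r) : r ≤ 2 := by
  obtain ⟨T, htree, hsub, hverts, hedges⟩ := h
  have hconn : ∀ i, (T i).Connected := fun i => ⟨(htree i).connected⟩
  by_cases hi : ∃ i, swap 0 2 ∉ (T i).verts ∧ swap 1 2 ∉ (T i).verts
  · obtain ⟨i, hi₂, hi₃⟩ := hi
    obtain ⟨h₁, h₂⟩ := edges_mem_of_notMem_verts (hconn i) (hsub i) hi₂ hi₃
    refine le_two_of_forall_mem_union (Set.subsingleton_singleton (a := i))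
      (subsingleton_setOf_mem_edgeSet hedges s(swap 0 1, (finRotate 3)⁻¹)) fun j => ?_
    obtain rfl | hji := eq_or_ne j i
    · exact Or.inl rfl
    · exact Or.inr <| edge_mem_of_notMem_edgeSet (hconn j) (hsub j)
        (Set.disjoint_left.1 (hedges i j hji.symm) h₁)
        (Set.disjoint_left.1 (hedges i j hji.symm) h₂)
  · push Not at hi
    exact le_two_of_forall_mem_union (subsingleton_setOf_mem_verts hverts (by decide))
      (subsingleton_setOf_mem_verts hverts (by decide)) fun i => or_iff_not_imp_left.2 (hi i)

lemma exists_treeConn_eq_two :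
    ∃ S : Set (Perm (Fin 3)), S.ncard = 3 ∧ treeConn BS₃ S = 2 := by
  have hS : ({1, finRotate 3, swap 0 1} : Set (Perm (Fin 3))).ncard = 3 :=
    Set.ncard_eq_three.2 ⟨_, _, _, by decide, by decide, by decide, rfl⟩
  have h := connectsSet_two_of_ncard_eq_three hS
  exact ⟨_, hS, le_antisymm (csSup_le ⟨2, h⟩ fun _ hr => connectsSet_le_two hr)
    (le_csSup ⟨2, fun _ hr => connectsSet_le_two hr⟩ h)⟩

end BubbleSortStarThree

/-- `κ₃(BS_3) = 2`. -/
theorem stmt_17 : kappa3 (bubbleSortStar 3 (le_refl 3)) = 2 :=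
  kappa3_eq_of_forall_le BubbleSortStarThree.exists_treeConn_eq_two fun _ hS =>
    (BubbleSortStarThree.connectsSet_two_of_ncard_eq_three hS).le_treeConn
      (Set.one_lt_ncard_iff_nontrivial.1 (by omega))
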